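/- Let a < x0 < b be real numbers. For c > 0 set f_c(t) = c/√(2π t³) · exp(−c²/(2t)), and define g_a(t) = Σ_{k ∈ ℤ} (x0 − a + 2k(b−a))/√(2π t³) · exp(−(x0 − a + 2k(b−a))²/(2t)) and g_b(t) = Σ_{k ∈ ℤ} (b − x0 + 2k(b−a))/√(2π t³) · exp(−(b − x0 + 2k(b−a))²/(2t)). Then for every t > 0, g_a(t) = f_{x0−a}(t) − ∫_0^t f_{b−a}(t−τ) g_b(τ) dτ and g_b(t) = f_{b−x0}(t) − ∫_0^t f_{b−a}(t−τ) g_a(τ) dτ. -/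

import Mathlib

/-!
The densities `f_c = bmHitDensity c` form a convolution semigroup: `f_c ⋆ f_d = f_{c+d}` on
`(0, t)` for `c, d > 0`. The substitution `x = ((c + d) τ - d t) / √(t τ (t - τ))` is chosen so
that `c² / (2 (t - τ)) + d² / (2 τ) = (c + d)² / (2 t) + x² / 2`; it turns the convolution into
the integral of a standard Gaussian density against a constant plus an odd function of `x`.

Since `f_{-c} = -f_c`, convolving `f_{b-a}` with the image `f_{b-x0+2k(b-a)}` in `g_b` gives
`-f_{x0-a+2j(b-a)}` for an index `j ≠ 0`, and `k ↦ j` is a bijection `ℤ ≃ ℤ ∖ {0}`. Summing over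
`k` (Fubini is justified by the Gaussian decay of `c ↦ f_c(t)`) yields
`∫ f_{b-a}(t - τ) g_b(τ) dτ = f_{x0-a}(t) - g_a(t)`, and symmetrically for the second identity.
-/

open MeasureTheory Set

/-- The first-hitting-time density of the level `c > 0` for a standard Brownian motion
started at `0`. -/
noncomputable def bmHitDensity (c t : ℝ) : ℝ :=
  c / Real.sqrt (2 * Real.pi * t ^ 3) * Real.exp (-c ^ 2 / (2 * t))

open Filter Topology ProbabilityTheory

lemma integral_eq_zero_of_odd {G : Type*} [MeasurableSpace G] [AddGroup G] [MeasurableNeg G]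
    {μ : Measure G} [μ.IsNegInvariant] {f : G → ℝ} (hf : f.Odd) : ∫ x, f x ∂μ = 0 := by
  have h := integral_neg_eq_self f μ
  rw [funext hf, integral_neg] at h
  exact self_eq_neg.mp h.symm

lemma bmHitDensity_neg (c t : ℝ) : bmHitDensity (-c) t = -bmHitDensity c t := by
  simp [bmHitDensity, neg_div]

lemma abs_bmHitDensity (c t : ℝ) : |bmHitDensity c t| = bmHitDensity |c| t := by
  simp only [bmHitDensity, abs_mul, abs_div, abs_of_nonneg (Real.sqrt_nonneg _),
    abs_of_pos (Real.exp_pos _), sq_abs]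

@[fun_prop]
lemma measurable_bmHitDensity (c : ℝ) : Measurable (bmHitDensity c) := by
  unfold bmHitDensity; fun_prop

lemma abs_bmHitDensity_le {t : ℝ} (ht : 0 < t) (c : ℝ) :
    |bmHitDensity c t| ≤ 2 * √t / √(2 * Real.pi * t ^ 3) * Real.exp (-c ^ 2 / (4 * t)) := by
  have h_abs_le : |c| ≤ 2 * √t * Real.exp (c ^ 2 / (4 * t)) := by
    have hy : |c| / (2 * √t) ≤ Real.exp ((|c| / (2 * √t)) ^ 2) := by
      nlinarith [Real.add_one_le_exp ((|c| / (2 * √t)) ^ 2), sq_nonneg (|c| / (2 * √t) - 1)]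
    rwa [div_pow, sq_abs, mul_pow, Real.sq_sqrt ht.le, div_le_iff₀ (by positivity),
      show (2 : ℝ) ^ 2 * t = 4 * t by ring, mul_comm] at hy
  calc |bmHitDensity c t| = |c| / √(2 * Real.pi * t ^ 3) * Real.exp (-c ^ 2 / (2 * t)) := by
        rw [abs_bmHitDensity, bmHitDensity, sq_abs]
    _ ≤ 2 * √t * Real.exp (c ^ 2 / (4 * t)) / √(2 * Real.pi * t ^ 3) *
          Real.exp (-c ^ 2 / (2 * t)) := by gcongr
    _ = 2 * √t / √(2 * Real.pi * t ^ 3) * Real.exp (-c ^ 2 / (4 * t)) := by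
        rw [mul_div_right_comm, mul_assoc, ← Real.exp_add]
        congr 3
        field_simp
        ring

lemma summable_bmHitDensity_of_le {t L : ℝ} (ht : 0 < t) (hL : L ≠ 0) (r : ℝ) {c : ℤ → ℝ}
    (hc : ∀ k : ℤ, |r + k * L| ≤ |c k|) : Summable fun k ↦ bmHitDensity (c k) t := by
  set T := L ^ 2 / (4 * Real.pi * t)
  set S := |r| * |L| / (4 * Real.pi * t)
  refine Summable.of_norm_bounded
    ((summable_pow_mul_jacobiTheta₂_term_bound S (by positivity : 0 < T) 0).mul_left
      (2 * √t / √(2 * Real.pi * t ^ 3))) fun k ↦ ?_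
  refine (abs_bmHitDensity_le ht _).trans ?_
  rw [pow_zero, one_mul]
  gcongr 1
  rw [Real.exp_le_exp]
  have h_sq : (r + k * L) ^ 2 ≤ c k ^ 2 := sq_le_sq.mpr (hc k)
  have h_lin : -(2 * (|r| * |L| * |(k : ℝ)|)) ≤ 2 * r * (k * L) := by
    have : |r * (k * L)| = |r| * |L| * |(k : ℝ)| := by rw [abs_mul, abs_mul]; ring
    linarith [neg_abs_le (r * (k * L))]
  have hπ := Real.pi_pos
  simp only [T, S, Int.cast_abs]
  field_simp
  nlinarith [sq_nonneg r]

section Convolution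

variable {c d t τ : ℝ}

noncomputable def hitSubst (c d t τ : ℝ) : ℝ := ((c + d) * τ - d * t) / √(t * (τ * (t - τ)))

noncomputable def hitSubstDeriv (c d t τ : ℝ) : ℝ :=
  t ^ 2 * (c * τ + d * (t - τ)) / (2 * √(t * (τ * (t - τ))) ^ 3)

lemma hasDerivAt_hitSubst (hτ : τ ∈ Ioo 0 t) :
    HasDerivAt (hitSubst c d t) (hitSubstDeriv c d t τ) τ := by
  obtain ⟨hτ0, hτt⟩ := hτ
  have hpos : 0 < t * (τ * (t - τ)) := by
    have : 0 < t - τ := by linarith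
    have : 0 < t := by linarith
    positivity
  have hS : 0 < √(t * (τ * (t - τ))) := Real.sqrt_pos.2 hpos
  have hS2 : √(t * (τ * (t - τ))) ^ 2 = t * (τ * (t - τ)) := Real.sq_sqrt hpos.le
  have hnum : HasDerivAt (fun τ ↦ (c + d) * τ - d * t) (c + d) τ := by
    simpa using ((hasDerivAt_id τ).const_mul (c + d)).sub_const (d * t)
  have hden : HasDerivAt (fun τ ↦ √(t * (τ * (t - τ))))
      (1 / (2 * √(t * (τ * (t - τ)))) * (t * (1 * (t - τ) + τ * (0 - 1)))) τ :=
    (Real.hasDerivAt_sqrt hpos.ne').comp τ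
      (((hasDerivAt_id τ).mul ((hasDerivAt_const τ t).sub (hasDerivAt_id τ))).const_mul t)
  refine (hnum.div hden hS.ne').congr_deriv ?_
  rw [hitSubstDeriv]
  generalize √(t * (τ * (t - τ))) = S at hS hS2 ⊢
  field_simp
  linear_combination 2 * (c + d) * hS2

lemma hitSubstDeriv_pos (hc : 0 < c) (hd : 0 < d) (hτ : τ ∈ Ioo 0 t) :
    0 < hitSubstDeriv c d t τ := by
  obtain ⟨hτ0, hτt⟩ := hτ
  have : 0 < t - τ := by linarith
  have : 0 < t := by linarith
  unfold hitSubstDeriv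
  positivity

lemma strictMonoOn_hitSubst (hc : 0 < c) (hd : 0 < d) : StrictMonoOn (hitSubst c d t) (Ioo 0 t) :=
  strictMonoOn_of_hasDerivWithinAt_pos (convex_Ioo 0 t)
    (fun _ hτ ↦ (hasDerivAt_hitSubst hτ).continuousAt.continuousWithinAt)
    (fun _ hτ ↦ (hasDerivAt_hitSubst (interior_subset hτ)).hasDerivWithinAt)
    (fun _ hτ ↦ hitSubstDeriv_pos hc hd (interior_subset hτ))

lemma tendsto_inv_sqrt_nhdsWithin_Ioo {a : ℝ} (ha : t * (a * (t - a)) = 0) :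
    Tendsto (fun τ ↦ (√(t * (τ * (t - τ))))⁻¹) (𝓝[Ioo 0 t] a) atTop := by
  refine tendsto_inv_nhdsGT_zero.comp (tendsto_nhdsWithin_iff.2 ⟨?_, ?_⟩)
  · have h : Continuous fun τ ↦ √(t * (τ * (t - τ))) := by fun_prop
    simpa [ha] using (h.continuousWithinAt (s := Ioo 0 t) (x := a)).tendsto
  · filter_upwards [self_mem_nhdsWithin] with τ ⟨hτ0, hτt⟩
    have : 0 < t - τ := by linarith
    have : 0 < t := by linarith
    exact Real.sqrt_pos.2 (by positivity)

lemma tendsto_hitSubst_nhdsGT_zero (hd : 0 < d) (ht : 0 < t) :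
    Tendsto (hitSubst c d t) (𝓝[>] 0) atBot := by
  rw [← nhdsWithin_Ioo_eq_nhdsGT ht]
  have hnum : Tendsto (fun τ ↦ (c + d) * τ - d * t) (𝓝[Ioo 0 t] 0) (𝓝 ((c + d) * 0 - d * t)) :=
    (Continuous.tendsto (by fun_prop) 0).mono_left nhdsWithin_le_nhds
  exact (hnum.neg_mul_atTop (by nlinarith) (tendsto_inv_sqrt_nhdsWithin_Ioo (by ring))).congr
    fun τ ↦ (div_eq_mul_inv _ _).symm

lemma tendsto_hitSubst_nhdsLT (hc : 0 < c) (ht : 0 < t) :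
    Tendsto (hitSubst c d t) (𝓝[<] t) atTop := by
  rw [← nhdsWithin_Ioo_eq_nhdsLT ht]
  have hnum : Tendsto (fun τ ↦ (c + d) * τ - d * t) (𝓝[Ioo 0 t] t) (𝓝 ((c + d) * t - d * t)) :=
    (Continuous.tendsto (by fun_prop) t).mono_left nhdsWithin_le_nhds
  exact (hnum.pos_mul_atTop (by nlinarith) (tendsto_inv_sqrt_nhdsWithin_Ioo (by ring))).congr
    fun τ ↦ (div_eq_mul_inv _ _).symm

lemma surjOn_hitSubst (hc : 0 < c) (hd : 0 < d) (ht : 0 < t) :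
    SurjOn (hitSubst c d t) (Ioo 0 t) univ :=
  ContinuousOn.surjOn_of_tendsto (nonempty_Ioo.2 ht)
    (fun _ hτ ↦ (hasDerivAt_hitSubst hτ).continuousAt.continuousWithinAt)
    ((tendsto_comp_coe_Ioo_atBot ht).2 (tendsto_hitSubst_nhdsGT_zero hd ht))
    ((tendsto_comp_coe_Ioo_atTop ht).2 (tendsto_hitSubst_nhdsLT hc ht))

lemma abs_div_sqrt_sq_add_le_one {p : ℝ} (hp : 0 ≤ p) (x : ℝ) : |x / √(x ^ 2 + p)| ≤ 1 := by
  rw [abs_div, abs_of_nonneg (Real.sqrt_nonneg _), ← Real.sqrt_sq_eq_abs]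
  exact div_le_one_of_le₀ (Real.sqrt_le_sqrt (by linarith)) (Real.sqrt_nonneg _)

lemma gaussianPDFReal_zero_neg (v : NNReal) (x : ℝ) :
    gaussianPDFReal 0 v (-x) = gaussianPDFReal 0 v x := by
  simp [gaussianPDFReal]

/-- The integrand `bmHitDensity c (t - τ) * bmHitDensity d τ` pulled back along
`x = hitSubst c d t τ`. -/
noncomputable def hitConvGauss (c d t x : ℝ) : ℝ :=
  bmHitDensity (c + d) t * gaussianPDFReal 0 1 x *
    (1 + (d - c) / (c + d) * (x / √(x ^ 2 + 4 * c * d / t)))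

lemma integrable_gaussianPDFReal_mul_div_sqrt {p : ℝ} (hp : 0 ≤ p) :
    Integrable fun x ↦ gaussianPDFReal 0 1 x * (x / √(x ^ 2 + p)) :=
  ((integrable_gaussianPDFReal 0 1).bdd_mul (c := 1)
    (by fun_prop : Measurable fun x : ℝ ↦ x / √(x ^ 2 + p)).aestronglyMeasurable
    (ae_of_all _ (abs_div_sqrt_sq_add_le_one hp))).congr (ae_of_all _ fun _ ↦ mul_comm _ _)

lemma integral_gaussianPDFReal_mul_div_sqrt (p : ℝ) :
    ∫ x, gaussianPDFReal 0 1 x * (x / √(x ^ 2 + p)) = 0 :=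
  integral_eq_zero_of_odd fun x ↦ by
    rw [gaussianPDFReal_zero_neg, neg_sq, neg_div, mul_neg]

lemma hitConvGauss_eq (c d t x : ℝ) :
    hitConvGauss c d t x = bmHitDensity (c + d) t * gaussianPDFReal 0 1 x +
      bmHitDensity (c + d) t * ((d - c) / (c + d)) *
        (gaussianPDFReal 0 1 x * (x / √(x ^ 2 + 4 * c * d / t))) := by
  rw [hitConvGauss]; ring

lemma integrable_hitConvGauss (hc : 0 < c) (hd : 0 < d) (ht : 0 < t) :
    Integrable (hitConvGauss c d t) := by
  simp_rw [funext (hitConvGauss_eq c d t)]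
  exact ((integrable_gaussianPDFReal 0 1).const_mul _).add
    ((integrable_gaussianPDFReal_mul_div_sqrt (by positivity)).const_mul _)

lemma integral_hitConvGauss (hc : 0 < c) (hd : 0 < d) (ht : 0 < t) :
    ∫ x, hitConvGauss c d t x = bmHitDensity (c + d) t := by
  simp_rw [hitConvGauss_eq c d t]
  rw [integral_add ((integrable_gaussianPDFReal 0 1).const_mul _)
      ((integrable_gaussianPDFReal_mul_div_sqrt (by positivity)).const_mul _),
    integral_const_mul, integral_const_mul, integral_gaussianPDFReal_eq_one 0 one_ne_zero,
    integral_gaussianPDFReal_mul_div_sqrt]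
  ring

lemma sqrt_two_pi_mul_pow_three {s : ℝ} (hs : 0 ≤ s) :
    √(2 * Real.pi * s ^ 3) = √(2 * Real.pi) * (s * √s) := by
  rw [show 2 * Real.pi * s ^ 3 = 2 * Real.pi * (s ^ 2 * s) by ring,
    Real.sqrt_mul (by positivity : (0 : ℝ) ≤ 2 * Real.pi), Real.sqrt_mul (sq_nonneg s),
    Real.sqrt_sq hs]

lemma sq_hitSubst (hτ : τ ∈ Ioo 0 t) :
    hitSubst c d t τ ^ 2 = ((c + d) * τ - d * t) ^ 2 / (t * (τ * (t - τ))) := by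
  obtain ⟨hτ0, hτt⟩ := hτ
  have : 0 < t - τ := by linarith
  have : 0 < t := by linarith
  rw [hitSubst, div_pow, Real.sq_sqrt (by positivity)]

lemma exp_neg_hitSubst_sq_div_two (hτ : τ ∈ Ioo 0 t) :
    Real.exp (-hitSubst c d t τ ^ 2 / 2) =
      Real.exp (-c ^ 2 / (2 * (t - τ))) * Real.exp (-d ^ 2 / (2 * τ)) /
        Real.exp (-(c + d) ^ 2 / (2 * t)) := by
  obtain ⟨hτ0, hτt⟩ := hτ
  have : 0 < t - τ := by linarith
  have : 0 < t := by linarith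
  rw [eq_div_iff (Real.exp_pos _).ne', ← Real.exp_add, ← Real.exp_add, sq_hitSubst ⟨hτ0, hτt⟩]
  congr 1
  field_simp
  ring

lemma one_add_div_mul_hitSubst_div_sqrt (hc : 0 < c) (hd : 0 < d) (hτ : τ ∈ Ioo 0 t) :
    1 + (d - c) / (c + d) * (hitSubst c d t τ / √(hitSubst c d t τ ^ 2 + 4 * c * d / t)) =
      2 * c * d * t / ((c + d) * (c * τ + d * (t - τ))) := by
  obtain ⟨hτ0, hτt⟩ := hτ
  have : 0 < t - τ := by linarith
  have ht : 0 < t := by linarith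
  have hS : 0 < √(t * (τ * (t - τ))) := Real.sqrt_pos.2 (by positivity)
  have h_sq : hitSubst c d t τ ^ 2 + 4 * c * d / t =
      ((c * τ + d * (t - τ)) / √(t * (τ * (t - τ)))) ^ 2 := by
    rw [sq_hitSubst ⟨hτ0, hτt⟩, div_pow, Real.sq_sqrt (by positivity)]
    field_simp
    ring
  rw [h_sq, Real.sqrt_sq (by positivity), hitSubst]
  field_simp
  ring

lemma hitSubstDeriv_mul_hitConvGauss (hc : 0 < c) (hd : 0 < d) (hτ : τ ∈ Ioo 0 t) :
    hitSubstDeriv c d t τ * hitConvGauss c d t (hitSubst c d t τ) =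
      bmHitDensity c (t - τ) * bmHitDensity d τ := by
  obtain ⟨hτ0, hτt⟩ := hτ
  have hσ : 0 < t - τ := by linarith
  have ht : 0 < t := by linarith
  have hM : 0 < c * τ + d * (t - τ) := by positivity
  rw [hitConvGauss, one_add_div_mul_hitSubst_div_sqrt hc hd ⟨hτ0, hτt⟩, hitSubstDeriv,
    bmHitDensity, bmHitDensity, bmHitDensity, gaussianPDFReal, NNReal.coe_one, mul_one, mul_one,
    sub_zero, exp_neg_hitSubst_sq_div_two ⟨hτ0, hτt⟩,
    sqrt_two_pi_mul_pow_three ht.le, sqrt_two_pi_mul_pow_three hσ.le,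
    sqrt_two_pi_mul_pow_three hτ0.le, Real.sqrt_mul ht.le, Real.sqrt_mul hτ0.le]
  have ha := Real.sqrt_pos.2 ht
  have hb := Real.sqrt_pos.2 hτ0
  have he := Real.sqrt_pos.2 hσ
  have ha2 := Real.sq_sqrt ht.le
  have hb2 := Real.sq_sqrt hτ0.le
  have he2 := Real.sq_sqrt hσ.le
  generalize √t = a at ha ha2 ⊢
  generalize √τ = b at hb hb2 ⊢
  generalize √(t - τ) = e at he he2 ⊢
  rw [← he2, ← hb2] at hM ⊢
  rw [← ha2]
  have := Real.sqrt_pos.2 (by positivity : (0 : ℝ) < 2 * Real.pi)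
  field_simp

lemma eqOn_abs_hitSubstDeriv_smul_hitConvGauss (hc : 0 < c) (hd : 0 < d) :
    EqOn (fun τ ↦ |hitSubstDeriv c d t τ| • hitConvGauss c d t (hitSubst c d t τ))
      (fun τ ↦ bmHitDensity c (t - τ) * bmHitDensity d τ) (Ioo 0 t) := fun τ hτ ↦ by
  simp only [smul_eq_mul]
  rw [abs_of_pos (hitSubstDeriv_pos hc hd hτ), hitSubstDeriv_mul_hitConvGauss hc hd hτ]

lemma integrableOn_bmHitDensity_conv (hc : 0 < c) (hd : 0 < d) (ht : 0 < t) :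
    IntegrableOn (fun τ ↦ bmHitDensity c (t - τ) * bmHitDensity d τ) (Ioo 0 t) := by
  have h := (integrable_hitConvGauss hc hd ht).integrableOn (s := hitSubst c d t '' Ioo 0 t)
  rw [integrableOn_image_iff_integrableOn_abs_deriv_smul measurableSet_Ioo
    (fun τ hτ ↦ (hasDerivAt_hitSubst hτ).hasDerivWithinAt) (strictMonoOn_hitSubst hc hd).injOn]
    at h
  exact h.congr_fun (eqOn_abs_hitSubstDeriv_smul_hitConvGauss hc hd) measurableSet_Ioo

theorem setIntegral_bmHitDensity_conv (hc : 0 < c) (hd : 0 < d) (ht : 0 < t) :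
    ∫ τ in Ioo 0 t, bmHitDensity c (t - τ) * bmHitDensity d τ = bmHitDensity (c + d) t := by
  have h := integral_image_eq_integral_abs_deriv_smul measurableSet_Ioo
    (fun τ hτ ↦ (hasDerivAt_hitSubst hτ).hasDerivWithinAt)
    (strictMonoOn_hitSubst (t := t) hc hd).injOn
    (hitConvGauss c d t)
  rw [(surjOn_hitSubst hc hd ht).image_eq_of_mapsTo (mapsTo_univ _ _), Measure.restrict_univ,
    integral_hitConvGauss hc hd ht,
    setIntegral_congr_fun measurableSet_Ioo (eqOn_abs_hitSubstDeriv_smul_hitConvGauss hc hd)] at h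
  exact h.symm

lemma norm_bmHitDensity_mul (hc : 0 ≤ c) (s d τ : ℝ) :
    ‖bmHitDensity c s * bmHitDensity d τ‖ = bmHitDensity c s * bmHitDensity |d| τ := by
  rw [norm_mul, Real.norm_eq_abs, Real.norm_eq_abs, abs_bmHitDensity, abs_bmHitDensity,
    abs_of_nonneg hc]

lemma integrableOn_bmHitDensity_conv_of_ne_zero (hc : 0 < c) (hd : d ≠ 0) (ht : 0 < t) :
    IntegrableOn (fun τ ↦ bmHitDensity c (t - τ) * bmHitDensity d τ) (Ioo 0 t) :=
  (integrableOn_bmHitDensity_conv hc (abs_pos.2 hd) ht).mono'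
    (by fun_prop)
    (ae_of_all _ fun τ ↦ (norm_bmHitDensity_mul hc.le _ _ _).le)

lemma setIntegral_norm_bmHitDensity_conv (hc : 0 < c) (hd : d ≠ 0) (ht : 0 < t) :
    ∫ τ in Ioo 0 t, ‖bmHitDensity c (t - τ) * bmHitDensity d τ‖ = bmHitDensity (c + |d|) t := by
  simp_rw [norm_bmHitDensity_mul hc.le]
  exact setIntegral_bmHitDensity_conv hc (abs_pos.2 hd) ht

lemma setIntegral_bmHitDensity_conv_of_neg (hc : 0 < c) (hd : d < 0) (ht : 0 < t) :
    ∫ τ in Ioo 0 t, bmHitDensity c (t - τ) * bmHitDensity d τ = bmHitDensity (d - c) t := by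
  have h := setIntegral_bmHitDensity_conv hc (neg_pos.2 hd) ht
  have h_neg : (fun τ ↦ bmHitDensity c (t - τ) * bmHitDensity d τ) =
      fun τ ↦ -(bmHitDensity c (t - τ) * bmHitDensity (-d) τ) := by
    simp only [bmHitDensity_neg, mul_neg, neg_neg]
  rw [h_neg, integral_neg, h, ← bmHitDensity_neg, neg_add, neg_neg, add_comm, sub_eq_add_neg]

end Convolution

lemma add_two_mul_intCast_mul_ne_zero {v L : ℝ} (hv : 0 < v) (hvL : v < L) (k : ℤ) :
    v + 2 * k * L ≠ 0 := by
  rcases le_or_gt 0 k with hk | hk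
  · have : (0 : ℝ) ≤ k := by exact_mod_cast hk
    nlinarith
  · have : (k : ℝ) ≤ -1 := by exact_mod_cast (by omega : k ≤ -1)
    nlinarith

lemma setIntegral_mul_tsum_bmHitDensity {L v t : ℝ} (hv : 0 < v) (hvL : v < L) (ht : 0 < t) :
    ∫ τ in Ioo 0 t, bmHitDensity L (t - τ) * ∑' k : ℤ, bmHitDensity (v + 2 * k * L) τ =
      ∑' k : ℤ, ∫ τ in Ioo 0 t, bmHitDensity L (t - τ) * bmHitDensity (v + 2 * k * L) τ := by
  have hL : 0 < L := hv.trans hvL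
  have hne := add_two_mul_intCast_mul_ne_zero hv hvL
  have h_norm : Summable fun k : ℤ ↦
      ∫ τ in Ioo 0 t, ‖bmHitDensity L (t - τ) * bmHitDensity (v + 2 * k * L) τ‖ := by
    simp_rw [setIntegral_norm_bmHitDensity_conv hL (hne _) ht]
    refine summable_bmHitDensity_of_le ht (by positivity : 2 * L ≠ 0) v fun k ↦ ?_
    rw [abs_of_nonneg (by positivity : 0 ≤ L + |v + 2 * k * L|)]
    exact le_add_of_nonneg_of_le hL.le (le_of_eq (by ring_nf))
  simp_rw [← tsum_mul_left]
  exact (integral_tsum_of_summable_integral_norm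
    (fun k ↦ integrableOn_bmHitDensity_conv_of_ne_zero hL (hne k) ht) h_norm).symm

theorem tsum_bmHitDensity_images {L u v t : ℝ} (hu : 0 < u) (hv : 0 < v) (huv : u + v = L)
    (ht : 0 < t) :
    ∑' k : ℤ, bmHitDensity (u + 2 * k * L) t = bmHitDensity u t -
      ∫ τ in (0 : ℝ)..t, bmHitDensity L (t - τ) * ∑' k : ℤ, bmHitDensity (v + 2 * k * L) τ := by
  have hL : 0 < L := by linarith
  have hF : Summable fun k : ℤ ↦ bmHitDensity (u + 2 * k * L) t :=
    summable_bmHitDensity_of_le ht (by positivity : 2 * L ≠ 0) u fun k ↦ le_of_eq (by ring_nf)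
  have hF_pos : Summable fun n : ℕ ↦ bmHitDensity (u + 2 * ((n : ℤ) + 1 : ℤ) * L) t :=
    hF.comp_injective (i := fun n : ℕ ↦ (n : ℤ) + 1) fun m n h ↦ by simpa using h
  have hF_neg : Summable fun n : ℕ ↦ bmHitDensity (u + 2 * (-((n : ℤ) + 1) : ℤ) * L) t :=
    hF.comp_injective (i := fun n : ℕ ↦ -((n : ℤ) + 1)) fun m n h ↦ by simpa using h
  have h_conv_pos : ∀ n : ℕ,
      ∫ τ in Ioo 0 t, bmHitDensity L (t - τ) * bmHitDensity (v + 2 * ((n : ℤ) : ℝ) * L) τ =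
        -bmHitDensity (u + 2 * ((-((n : ℤ) + 1) : ℤ) : ℝ) * L) t := fun n ↦ by
    rw [setIntegral_bmHitDensity_conv hL (by positivity) ht, ← bmHitDensity_neg]
    congr 1
    push_cast
    linear_combination huv
  have h_conv_neg : ∀ n : ℕ,
      ∫ τ in Ioo 0 t, bmHitDensity L (t - τ) *
          bmHitDensity (v + 2 * ((-((n : ℤ) + 1) : ℤ) : ℝ) * L) τ =
        -bmHitDensity (u + 2 * (((n : ℤ) + 1 : ℤ) : ℝ) * L) t := fun n ↦ by
    rw [setIntegral_bmHitDensity_conv_of_neg hL (by push_cast; nlinarith) ht, ← bmHitDensity_neg]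
    congr 1
    push_cast
    linear_combination huv
  have h_conv_sum : HasSum
      (fun k : ℤ ↦ ∫ τ in Ioo 0 t, bmHitDensity L (t - τ) * bmHitDensity (v + 2 * k * L) τ)
      (-∑' n : ℕ, bmHitDensity (u + 2 * ((-((n : ℤ) + 1) : ℤ) : ℝ) * L) t +
        -∑' n : ℕ, bmHitDensity (u + 2 * (((n : ℤ) + 1 : ℤ) : ℝ) * L) t) :=
    HasSum.of_nat_of_neg_add_one (by simpa only [h_conv_pos] using hF_neg.hasSum.neg)
      (by simpa only [h_conv_neg] using hF_pos.hasSum.neg)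
  rw [intervalIntegral.integral_of_le ht.le, integral_Ioc_eq_integral_Ioo,
    setIntegral_mul_tsum_bmHitDensity hv (by linarith) ht, h_conv_sum.tsum_eq,
    tsum_of_add_one_of_neg_add_one (f := fun k : ℤ ↦ bmHitDensity (u + 2 * k * L) t)
      hF_pos hF_neg]
  simp only [Int.cast_zero, mul_zero, zero_mul, add_zero]
  ring

theorem stmt_18 (a x0 b : ℝ) (hax : a < x0) (hxb : x0 < b) :
    ∀ t : ℝ, 0 < t →
      (∑' k : ℤ, (x0 - a + 2 * (k : ℝ) * (b - a)) / Real.sqrt (2 * Real.pi * t ^ 3) *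
          Real.exp (-(x0 - a + 2 * (k : ℝ) * (b - a)) ^ 2 / (2 * t))) =
        bmHitDensity (x0 - a) t -
          (∫ τ in (0 : ℝ)..t, bmHitDensity (b - a) (t - τ) *
            ∑' k : ℤ, (b - x0 + 2 * (k : ℝ) * (b - a)) / Real.sqrt (2 * Real.pi * τ ^ 3) *
              Real.exp (-(b - x0 + 2 * (k : ℝ) * (b - a)) ^ 2 / (2 * τ))) ∧
      (∑' k : ℤ, (b - x0 + 2 * (k : ℝ) * (b - a)) / Real.sqrt (2 * Real.pi * t ^ 3) *
          Real.exp (-(b - x0 + 2 * (k : ℝ) * (b - a)) ^ 2 / (2 * t))) =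
        bmHitDensity (b - x0) t -
          ∫ τ in (0 : ℝ)..t, bmHitDensity (b - a) (t - τ) *
            ∑' k : ℤ, (x0 - a + 2 * (k : ℝ) * (b - a)) / Real.sqrt (2 * Real.pi * τ ^ 3) *
              Real.exp (-(x0 - a + 2 * (k : ℝ) * (b - a)) ^ 2 / (2 * τ)) := fun t ht ↦
  ⟨tsum_bmHitDensity_images (sub_pos.2 hax) (sub_pos.2 hxb) (by ring) ht,
    tsum_bmHitDensity_images (sub_pos.2 hxb) (sub_pos.2 hax) (by ring) ht⟩
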